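/- arXiv:2109.14779 — 5 statements merged into one kernel-verified Lean document; each statement's English description precedes it below -/
import Mathlib

section
/- Let n ≥ 2, let L be a real n×n matrix with L 1_n = 0_n, and let Q be as in the context. Then Q L = (Q L Qᵀ) Q. Consequently, for every complex number λ and every complex vector x ≠ 0 with L x = λ x and Q x ≠ 0, one has (Q L Qᵀ)(Q x) = λ (Q x); that is, λ is an eigenvalue of L̄ := Q L Qᵀ with eigenvector Q x. -/
open Matrix

/-- For `n ≥ 2`, `L` a real `n×n` matrix with `L 1ₙ = 0`, and `Q` the
`(n−1)×n` matrix with `Q 1ₙ = 0`, `Q Qᵀ = I`, `Qᵀ Q = I − (1/n) 1 1ᵀ`, we have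
`Q L = (Q L Qᵀ) Q`; consequently any eigenpair `(λ, x)` of `L` with `Q x ≠ 0`
yields the eigenpair `(λ, Q x)` of `L̄ = Q L Qᵀ` (over ℂ, real matrices acting
entrywise). -/
theorem stmt_0 (n : ℕ) (hn : 2 ≤ n)
    (L : Matrix (Fin n) (Fin n) ℝ)
    (hL : L.mulVec (fun _ => (1 : ℝ)) = 0)
    (Q : Matrix (Fin (n - 1)) (Fin n) ℝ)
    (hQ1 : Q.mulVec (fun _ => (1 : ℝ)) = 0)
    (hQQt : Q * Qᵀ = 1)
    (hQtQ : Qᵀ * Q = 1 - (n : ℝ)⁻¹ • Matrix.of (fun _ _ => (1 : ℝ))) :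
    Q * L = (Q * L * Qᵀ) * Q ∧
    ∀ (lam : ℂ) (x : Fin n → ℂ), x ≠ 0 →
      (L.map (Complex.ofReal)).mulVec x = lam • x →
      (Q.map (Complex.ofReal)).mulVec x ≠ 0 →
      ((Q * L * Qᵀ).map (Complex.ofReal)).mulVec ((Q.map (Complex.ofReal)).mulVec x)
        = lam • (Q.map (Complex.ofReal)).mulVec x := by
  have mapmul : ∀ {m p q : ℕ} (A : Matrix (Fin m) (Fin p) ℝ) (B : Matrix (Fin p) (Fin q) ℝ),
      (A * B).map Complex.ofReal = A.map Complex.ofReal * B.map Complex.ofReal := by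
    intro m p q A B
    ext i j
    simp [Matrix.mul_apply, Matrix.map_apply]
  have hLJ : L * Matrix.of (fun _ _ => (1 : ℝ)) = 0 := by
    ext i j
    have := congrFun hL i
    simpa [Matrix.mul_apply, Matrix.mulVec, dotProduct] using this
  have key : Q * L = (Q * L * Qᵀ) * Q := by
    calc Q * L = Q * L * (1 : Matrix (Fin n) (Fin n) ℝ) := by rw [Matrix.mul_one]
    _ = Q * L * (Qᵀ * Q + (n : ℝ)⁻¹ • Matrix.of (fun _ _ => (1 : ℝ))) := by
        rw [hQtQ]; congr 1; abel
    _ = Q * L * Qᵀ * Q + (n : ℝ)⁻¹ • (Q * (L * Matrix.of (fun _ _ => (1 : ℝ)))) := by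
        rw [Matrix.mul_add]; rw [Matrix.mul_smul, Matrix.mul_assoc (Q*L), Matrix.mul_assoc Q, Matrix.mul_assoc Q]
    _ = Q * L * Qᵀ * Q := by rw [hLJ]; simp
  refine ⟨key, ?_⟩
  intro lam x hx hLx hQx
  have h2 : ((Q * L * Qᵀ).map (Complex.ofReal)) * (Q.map (Complex.ofReal)) = (Q.map (Complex.ofReal)) * (L.map (Complex.ofReal)) := by
    rw [← mapmul, ← key, mapmul]
  calc ((Q * L * Qᵀ).map (Complex.ofReal)).mulVec ((Q.map (Complex.ofReal)).mulVec x)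
      = (((Q * L * Qᵀ).map (Complex.ofReal)) * (Q.map (Complex.ofReal))).mulVec x := by
        rw [Matrix.mulVec_mulVec]
    _ = ((Q.map (Complex.ofReal)) * (L.map (Complex.ofReal))).mulVec x := by rw [h2]
    _ = (Q.map (Complex.ofReal)).mulVec ((L.map (Complex.ofReal)).mulVec x) := by
        rw [Matrix.mulVec_mulVec]
    _ = lam • (Q.map (Complex.ofReal)).mulVec x := by
        rw [hLx, Matrix.mulVec_smul]
end

section
/- Let n ≥ 2, let L be a real n×n matrix with L 1_n = 0_n, and let Q be as in the context. Then the characteristic polynomials satisfy det(s I_n − L) = s · det(s I_{n−1} − Q L Qᵀ) for all s; in other words, the spectrum of L̄ = Q L Qᵀ (with multiplicity) equals the spectrum of L with one copy of the eigenvalue 0 (the one corresponding to the eigenvector 1_n) removed. -/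
/-!
`U = [1ᵀ; Q]` and `V = [n⁻¹ 1, Qᵀ]` are mutually inverse by the hypotheses on `Q`, so
`det (s I - L) = det (U (s I - L) V)`. Since `L 1 = 0`, the first column of `U L V` vanishes,
making `U (s I - L) V` block upper triangular with diagonal blocks `s` and `s I - Q L Qᵀ`.
-/

open Matrix

namespace Matrix

variable {R m n : Type*} [Fintype n]

theorem fromRows_mul_mul_fromCols_of_mulVec_eq_zero [Semiring R] (L : Matrix n n R)
    (v w : n → R) (Q : Matrix m n R) (Q' : Matrix n m R) (hLv : L *ᵥ v = 0) :
    fromRows (replicateRow Unit w) Q * L * fromCols (replicateCol Unit v) Q' =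
      fromBlocks 0 (replicateRow Unit w * L * Q') 0 (Q * L * Q') := by
  have hLv' : L * replicateCol Unit v = 0 := by
    rw [← replicateCol_mulVec, hLv, replicateCol_zero]
  rw [fromRows_mul, fromRows_mul_fromCols, Matrix.mul_assoc (replicateRow Unit w), hLv',
    Matrix.mul_assoc Q, hLv', Matrix.mul_zero, Matrix.mul_zero]

theorem det_smul_one_sub_eq_mul_det_smul_one_sub_of_mulVec_eq_zero [CommRing R] [Fintype m]
    [DecidableEq m] [DecidableEq n] (L : Matrix n n R) (v w : n → R)
    (Q : Matrix m n R) (Q' : Matrix n m R)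
    (hUV : fromRows (replicateRow Unit w) Q * fromCols (replicateCol Unit v) Q' = 1)
    (hVU : fromCols (replicateCol Unit v) Q' * fromRows (replicateRow Unit w) Q = 1)
    (hLv : L *ᵥ v = 0) (s : R) :
    det (s • 1 - L) = s * det (s • 1 - Q * L * Q') := by
  have hconj :
      fromRows (replicateRow Unit w) Q * (s • 1 - L) * fromCols (replicateCol Unit v) Q' =
        fromBlocks (s • 1) (-(replicateRow Unit w * L * Q')) 0 (s • 1 - Q * L * Q') := by
    rw [Matrix.mul_sub, Matrix.sub_mul, Matrix.mul_smul, Matrix.mul_one, Matrix.smul_mul, hUV,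
      fromRows_mul_mul_fromCols_of_mulVec_eq_zero L v w Q Q' hLv, ← fromBlocks_one,
      fromBlocks_smul, sub_eq_add_neg, fromBlocks_neg, fromBlocks_add]
    simp [sub_eq_add_neg]
  rw [← det_conj_of_mul_eq_one hUV hVU, hconj, det_fromBlocks_zero₂₁, det_smul, det_one]
  simp

end Matrix

/-- For `n ≥ 2`, `L` real `n×n` with `L 1ₙ = 0` and `Q` as in the context,
the characteristic polynomials satisfy `det(s Iₙ − L) = s · det(s Iₙ₋₁ − Q L Qᵀ)` for
all `s`: the spectrum of `L̄ = Q L Qᵀ` (with multiplicity) is that of `L` with one copy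
of the eigenvalue `0` (corresponding to `1ₙ`) removed. -/
theorem stmt_1 (n : ℕ) (hn : 2 ≤ n)
    (L : Matrix (Fin n) (Fin n) ℝ)
    (hL : L.mulVec (fun _ => (1 : ℝ)) = 0)
    (Q : Matrix (Fin (n - 1)) (Fin n) ℝ)
    (hQ1 : Q.mulVec (fun _ => (1 : ℝ)) = 0)
    (hQQt : Q * Qᵀ = 1)
    (hQtQ : Qᵀ * Q = 1 - (n : ℝ)⁻¹ • Matrix.of (fun _ _ => (1 : ℝ))) :
    ∀ s : ℝ,
      (s • (1 : Matrix (Fin n) (Fin n) ℝ) - L).det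
        = s * (s • (1 : Matrix (Fin (n - 1)) (Fin (n - 1)) ℝ) - Q * L * Qᵀ).det := by
  have hn0 : (n : ℝ) ≠ 0 := by positivity
  set v : Fin n → ℝ := (n : ℝ)⁻¹ • fun _ => 1
  have hLv : L *ᵥ v = 0 := by rw [mulVec_smul, hL, smul_zero]
  have hQv : Q * replicateCol Unit v = 0 := by
    rw [← replicateCol_mulVec, mulVec_smul, hQ1, smul_zero, replicateCol_zero]
  have hOneQt : replicateRow Unit (fun _ : Fin n => (1 : ℝ)) * Qᵀ = 0 := by
    rw [← transpose_replicateCol, ← transpose_mul, ← replicateCol_mulVec, hQ1,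
      replicateCol_zero, transpose_zero]
  have hUV : fromRows (replicateRow Unit fun _ => 1) Q * fromCols (replicateCol Unit v) Qᵀ
      = 1 := by
    rw [fromRows_mul_fromCols, hQv, hQQt, hOneQt, ← fromBlocks_one]
    congr 1
    ext
    simp [v, dotProduct, hn0]
  have hVU : fromCols (replicateCol Unit v) Qᵀ * fromRows (replicateRow Unit fun _ => 1) Q
      = 1 := by
    rw [fromCols_mul_fromRows, hQtQ]
    ext
    simp [v, mul_apply]
  exact det_smul_one_sub_eq_mul_det_smul_one_sub_of_mulVec_eq_zero L v _ Q Qᵀ hUV hVU hLv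
end

section
/- Let n ≥ 2, let L be a real n×n matrix with L 1_n = 0_n, and let Q be as in the context. If 0 is an eigenvalue of L of algebraic multiplicity exactly 1 and every nonzero eigenvalue of L has positive real part (as holds for the Laplacian of a digraph containing a directed spanning tree), then every eigenvalue of L̄ = Q L Qᵀ has positive real part; i.e., −L̄ is Hurwitz stable. -/
/-! Because `L 1 = 0` and `QᵀQ = I - J/n`, we have `L QᵀQ = L`: thus `L = (L Qᵀ) Q` while
`L̄ = Q (L Qᵀ)`, and comparing the characteristic polynomials of `AB` and `BA` gives
`χ_L = X · χ_L̄`. A simple zero eigenvalue of `L` therefore means that `0` is not an eigenvalue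
of `L̄`, and every eigenvalue of `L̄` is a nonzero eigenvalue of `L`. -/

open Matrix Polynomial

theorem Matrix.exists_mulVec_eq_smul_iff_isRoot_charpoly {R n : Type*} [CommRing R] [IsDomain R]
    [Fintype n] [DecidableEq n] (M : Matrix n n R) (μ : R) :
    (∃ x, x ≠ 0 ∧ M *ᵥ x = μ • x) ↔ M.charpoly.IsRoot μ := by
  rw [← charpoly_toLin', ← Module.End.hasEigenvalue_iff_isRoot_charpoly,
    Module.End.hasEigenvalue_iff, Submodule.ne_bot_iff]
  simp [and_comm]

theorem Matrix.charpoly_eq_X_mul_charpoly_mul_mul {R m n : Type*} [CommRing R]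
    [Fintype m] [Fintype n] [DecidableEq m] [DecidableEq n]
    (A : Matrix m n R) (L : Matrix n n R) (B : Matrix n m R)
    (hcard : Fintype.card m + 1 = Fintype.card n) (h : L * (B * A) = L) :
    L.charpoly = X * (A * L * B).charpoly := by
  apply (isRegular_X_pow (Fintype.card m)).left
  dsimp only
  rw [← mul_assoc, ← pow_succ, hcard, Matrix.mul_assoc, charpoly_mul_comm', Matrix.mul_assoc, h]

theorem Polynomial.rootMultiplicity_zero_X_mul {R : Type*} [CommRing R] [IsDomain R] {p : R[X]}
    (hp : p ≠ 0) : (X * p).rootMultiplicity 0 = p.rootMultiplicity 0 + 1 := by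
  simpa [mul_comm] using rootMultiplicity_mul_X_sub_C_pow (a := (0 : R)) (n := 1) hp

theorem Matrix.mul_ones_eq_zero {R m n o : Type*} [Fintype n] [NonAssocSemiring R]
    {L : Matrix m n R} (hL : L *ᵥ (fun _ => 1) = 0) :
    L * of (fun (_ : n) (_ : o) => (1 : R)) = 0 := by
  ext i j
  simpa [mul_apply, mulVec, dotProduct] using congrFun hL i

theorem stmt_2_general (n : ℕ) (hn : 2 ≤ n)
    (L : Matrix (Fin n) (Fin n) ℝ)
    (hL : L.mulVec (fun _ => (1 : ℝ)) = 0)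
    (Q : Matrix (Fin (n - 1)) (Fin n) ℝ)
    (hQtQ : Qᵀ * Q = 1 - (n : ℝ)⁻¹ • Matrix.of (fun _ _ => (1 : ℝ)))
    (hmult : Polynomial.rootMultiplicity (0 : ℂ)
      (Matrix.charpoly (L.map (Complex.ofReal))) = 1)
    (hpos : ∀ lam : ℂ,
      (∃ x : Fin n → ℂ, x ≠ 0 ∧ (L.map (Complex.ofReal)).mulVec x = lam • x) →
      lam ≠ 0 → 0 < lam.re) :
    ∀ lam : ℂ,
      (∃ x : Fin (n - 1) → ℂ, x ≠ 0 ∧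
        ((Q * L * Qᵀ).map (Complex.ofReal)).mulVec x = lam • x) →
      0 < lam.re := by
  intro lam heig
  have hLP : L * (Qᵀ * Q) = L := by
    rw [hQtQ, Matrix.mul_sub, Matrix.mul_one, Matrix.mul_smul, mul_ones_eq_zero hL, smul_zero,
      sub_zero]
  have hchar : (L.map Complex.ofReal).charpoly =
      X * ((Q * L * Qᵀ).map Complex.ofReal).charpoly := by
    have hcard : Fintype.card (Fin (n - 1)) + 1 = Fintype.card (Fin n) := by
      simp only [Fintype.card_fin]; omega
    have := congrArg (map Complex.ofRealHom) (charpoly_eq_X_mul_charpoly_mul_mul Q L Qᵀ hcard hLP)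
    rwa [Polynomial.map_mul, map_X, ← charpoly_map, ← charpoly_map] at this
  have hroot := (exists_mulVec_eq_smul_iff_isRoot_charpoly _ lam).1 heig
  have hlam : lam ≠ 0 := by
    rintro rfl
    rw [hchar, rootMultiplicity_zero_X_mul (charpoly_monic _).ne_zero, add_eq_right] at hmult
    exact (rootMultiplicity_pos (charpoly_monic _).ne_zero).2 hroot |>.ne' hmult
  refine hpos lam ((exists_mulVec_eq_smul_iff_isRoot_charpoly _ lam).2 ?_) hlam
  rw [hchar, IsRoot, eval_mul, hroot.eq_zero, mul_zero]

/-- For `n ≥ 2`, `L` real `n×n` with `L 1ₙ = 0` and `Q` as in the context: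
if `0` is an eigenvalue of `L` of algebraic multiplicity exactly `1` and every nonzero
eigenvalue of `L` has positive real part, then every eigenvalue of `L̄ = Q L Qᵀ` has
positive real part, i.e. `−L̄` is Hurwitz stable. Eigenvalues are taken over ℂ, real
matrices acting entrywise. -/
theorem stmt_2 (n : ℕ) (hn : 2 ≤ n)
    (L : Matrix (Fin n) (Fin n) ℝ)
    (hL : L.mulVec (fun _ => (1 : ℝ)) = 0)
    (Q : Matrix (Fin (n - 1)) (Fin n) ℝ)
    (hQ1 : Q.mulVec (fun _ => (1 : ℝ)) = 0)
    (hQQt : Q * Qᵀ = 1)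
    (hQtQ : Qᵀ * Q = 1 - (n : ℝ)⁻¹ • Matrix.of (fun _ _ => (1 : ℝ)))
    (hmult : Polynomial.rootMultiplicity (0 : ℂ)
      (Matrix.charpoly (L.map (Complex.ofReal))) = 1)
    (hpos : ∀ lam : ℂ,
      (∃ x : Fin n → ℂ, x ≠ 0 ∧ (L.map (Complex.ofReal)).mulVec x = lam • x) →
      lam ≠ 0 → 0 < lam.re) :
    ∀ lam : ℂ,
      (∃ x : Fin (n - 1) → ℂ, x ≠ 0 ∧
        ((Q * L * Qᵀ).map (Complex.ofReal)).mulVec x = lam • x) →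
      0 < lam.re :=
  stmt_2_general n hn L hL Q hQtQ hmult hpos
end

section
/- Let A be a real d×d matrix, H a real symmetric d×d matrix, and c ∈ (0,1). Then there exists a constant η > 0, depending only on A, H, and c, such that every solution φ of the linear ODE φ̇(t) = A φ(t) whose initial condition satisfies φ(0)ᵀ H φ(0) ≤ −‖φ(0)‖² satisfies φ(t)ᵀ H φ(t) ≤ −c ‖φ(t)‖² for all t ∈ [0, η]. (Applied with A = −(a/b) L̄_{σ(t_k)}, H = H_{σ(t_k)}, and c = μ_{σ(t_k)} λ_max(P), this shows the dwell time t_{k+1} − t_k of the switching law is lower bounded by a positive constant, so the switching law is well defined.) -/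
/-!
Put `B = H + c • 1`, so that `q(x) = xᵀ B x` equals `xᵀ H x + c ‖x‖²` and `q(φ 0) ≤ (c - 1) ‖φ 0‖²`.
Along `φ̇ = A φ` the derivatives of `‖φ‖²` and of `q(φ)` are the quadratic forms of `Aᵀ + A` and
`Aᵀ B + B A`, both bounded by `K ‖φ‖²` once `K` dominates the sums of the absolute values of
their entries.
Grönwall gives `‖φ t‖² ≤ ‖φ 0‖² e^{K t}`, hence `q(φ t) ≤ q(φ 0) + ‖φ 0‖² (e^{K t} - 1)`, which stays
`≤ 0` as long as `e^{K t} ≤ 2 - c`, i.e. for `t ≤ η := log (2 - c) / K`.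
-/

open Matrix Set Real

section

variable {ι : Type*} [Fintype ι]

lemma mul_self_le_dotProduct_self (x : ι → ℝ) (i : ι) : x i * x i ≤ x ⬝ᵥ x :=
  Finset.single_le_sum (fun k _ => mul_self_nonneg (x k)) (Finset.mem_univ i)

lemma dotProduct_self_nonneg (x : ι → ℝ) : 0 ≤ x ⬝ᵥ x :=
  Finset.sum_nonneg fun k _ => mul_self_nonneg (x k)

lemma sum_sum_abs_nonneg (C : Matrix ι ι ℝ) : 0 ≤ ∑ i, ∑ j, |C i j| :=
  Finset.sum_nonneg fun i _ => Finset.sum_nonneg fun j _ => abs_nonneg (C i j)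

lemma abs_mul_le_dotProduct_self (x : ι → ℝ) (i j : ι) : |x i * x j| ≤ x ⬝ᵥ x := by
  have hi := mul_self_le_dotProduct_self x i
  have hj := mul_self_le_dotProduct_self x j
  rw [abs_le]
  constructor
  · nlinarith [sq_nonneg (x i + x j)]
  · nlinarith [sq_nonneg (x i - x j)]

lemma abs_dotProduct_mulVec_self_le (C : Matrix ι ι ℝ) (x : ι → ℝ) :
    |x ⬝ᵥ C *ᵥ x| ≤ (∑ i, ∑ j, |C i j|) * (x ⬝ᵥ x) := by
  have hsum : x ⬝ᵥ C *ᵥ x = ∑ i, ∑ j, C i j * (x i * x j) := by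
    simp only [dotProduct, mulVec, Finset.mul_sum]
    exact Finset.sum_congr rfl fun i _ => Finset.sum_congr rfl fun j _ => by ring
  calc |x ⬝ᵥ C *ᵥ x| ≤ ∑ i, ∑ j, |C i j * (x i * x j)| := by
        rw [hsum]
        exact (Finset.abs_sum_le_sum_abs _ _).trans
          (Finset.sum_le_sum fun i _ => Finset.abs_sum_le_sum_abs _ _)
    _ ≤ ∑ i, ∑ j, |C i j| * (x ⬝ᵥ x) := by
        gcongr with i _ j _
        rw [abs_mul]
        exact mul_le_mul_of_nonneg_left (abs_mul_le_dotProduct_self x i j) (abs_nonneg _)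
    _ = (∑ i, ∑ j, |C i j|) * (x ⬝ᵥ x) := by simp only [Finset.sum_mul]

lemma HasDerivAt.dotProduct {u v : ℝ → ι → ℝ} {u' v' : ι → ℝ} {t : ℝ}
    (hu : HasDerivAt u u' t) (hv : HasDerivAt v v' t) :
    HasDerivAt (fun s => u s ⬝ᵥ v s) (u' ⬝ᵥ v t + u t ⬝ᵥ v') t := by
  have := HasDerivAt.fun_sum (u := Finset.univ) fun i _ =>
    (hasDerivAt_pi.1 hu i).mul (hasDerivAt_pi.1 hv i)
  simpa [_root_.dotProduct, Finset.sum_add_distrib] using this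

lemma HasDerivAt.const_mulVec (B : Matrix ι ι ℝ) {u : ℝ → ι → ℝ} {u' : ι → ℝ} {t : ℝ}
    (hu : HasDerivAt u u' t) : HasDerivAt (fun s => B *ᵥ u s) (B *ᵥ u') t :=
  (mulVecLin B).toContinuousLinearMap.hasFDerivAt.comp_hasDerivAt t hu

lemma HasDerivAt.dotProduct_mulVec_self_of_linear {A : Matrix ι ι ℝ} (B : Matrix ι ι ℝ)
    {φ : ℝ → ι → ℝ} {t : ℝ} (hφ : HasDerivAt φ (A *ᵥ φ t) t) :
    HasDerivAt (fun s => φ s ⬝ᵥ B *ᵥ φ s) (φ t ⬝ᵥ (Aᵀ * B + B * A) *ᵥ φ t) t := by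
  convert hφ.dotProduct (hφ.const_mulVec B) using 1
  rw [add_mulVec, dotProduct_add, ← mulVec_mulVec, ← mulVec_mulVec, dotProduct_mulVec,
    vecMul_transpose]

lemma dotProduct_self_le_exp_of_linear {A : Matrix ι ι ℝ} {φ : ℝ → ι → ℝ}
    (hφ : ∀ t, HasDerivAt φ (A *ᵥ φ t) t) {K : ℝ} (hK : ∑ i, ∑ j, |(Aᵀ + A) i j| ≤ K)
    {t : ℝ} (ht : 0 ≤ t) : φ t ⬝ᵥ φ t ≤ φ 0 ⬝ᵥ φ 0 * exp (K * t) := by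
  have hderiv : ∀ s, HasDerivAt (fun s => φ s ⬝ᵥ φ s) (φ s ⬝ᵥ (Aᵀ + A) *ᵥ φ s) s := fun s => by
    convert (hφ s).dotProduct (hφ s) using 1
    rw [add_mulVec, dotProduct_add, dotProduct_mulVec, vecMul_transpose, dotProduct_comm]
  have := le_gronwallBound_of_liminf_deriv_right_le (ε := 0) (b := t)
    (fun s _ => (hderiv s).continuousAt.continuousWithinAt)
    (fun s _ _ hr => (hderiv s).hasDerivWithinAt.liminf_right_slope_le hr) le_rfl
    (fun s _ => by
      rw [add_zero]
      exact (le_abs_self _).trans ((abs_dotProduct_mulVec_self_le _ _).trans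
        (mul_le_mul_of_nonneg_right hK (dotProduct_self_nonneg _))))
    t ⟨ht, le_rfl⟩
  rwa [gronwallBound_ε0, sub_zero] at this

lemma dotProduct_mulVec_self_le_of_linear {A : Matrix ι ι ℝ} {φ : ℝ → ι → ℝ}
    (hφ : ∀ t, HasDerivAt φ (A *ᵥ φ t) t) (B : Matrix ι ι ℝ) {K : ℝ}
    (hB : ∑ i, ∑ j, |(Aᵀ * B + B * A) i j| ≤ K) (hA : ∑ i, ∑ j, |(Aᵀ + A) i j| ≤ K)
    {t : ℝ} (ht : 0 ≤ t) :
    φ t ⬝ᵥ B *ᵥ φ t ≤ φ 0 ⬝ᵥ B *ᵥ φ 0 + φ 0 ⬝ᵥ φ 0 * (exp (K * t) - 1) := by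
  have hK : 0 ≤ K := (sum_sum_abs_nonneg _).trans hA
  have hbound : ∀ s, HasDerivAt (fun s => φ 0 ⬝ᵥ B *ᵥ φ 0 + φ 0 ⬝ᵥ φ 0 * (exp (K * s) - 1))
      (φ 0 ⬝ᵥ φ 0 * (exp (K * s) * K)) s := fun s => by
    simpa using ((((hasDerivAt_id s).const_mul K).exp).sub_const 1).const_mul (φ 0 ⬝ᵥ φ 0)
      |>.const_add (φ 0 ⬝ᵥ B *ᵥ φ 0)
  refine image_le_of_deriv_right_le_deriv_boundary (a := 0)
    (fun s _ => ((hφ s).dotProduct_mulVec_self_of_linear B).continuousAt.continuousWithinAt)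
    (fun s _ => ((hφ s).dotProduct_mulVec_self_of_linear B).hasDerivWithinAt)
    (by simp) (fun s _ => (hbound s).continuousAt.continuousWithinAt)
    (fun s _ => (hbound s).hasDerivWithinAt) (fun s hs => ?_) ⟨ht, le_rfl⟩
  calc φ s ⬝ᵥ (Aᵀ * B + B * A) *ᵥ φ s ≤ K * (φ s ⬝ᵥ φ s) :=
        (le_abs_self _).trans ((abs_dotProduct_mulVec_self_le _ _).trans
          (mul_le_mul_of_nonneg_right hB (dotProduct_self_nonneg _)))
    _ ≤ K * (φ 0 ⬝ᵥ φ 0 * exp (K * s)) :=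
        mul_le_mul_of_nonneg_left (dotProduct_self_le_exp_of_linear hφ hA hs.1) hK
    _ = φ 0 ⬝ᵥ φ 0 * (exp (K * s) * K) := by ring

end

theorem stmt_8_general (d : ℕ)
    (A H : Matrix (Fin d) (Fin d) ℝ)
    (c : ℝ) (hc1 : c < 1) :
    ∃ η : ℝ, 0 < η ∧
      ∀ φ : ℝ → Fin d → ℝ,
        (∀ t : ℝ, HasDerivAt φ (A.mulVec (φ t)) t) →
        φ 0 ⬝ᵥ H.mulVec (φ 0) ≤ -(φ 0 ⬝ᵥ φ 0) →
        ∀ t ∈ Set.Icc (0 : ℝ) η, φ t ⬝ᵥ H.mulVec (φ t) ≤ -c * (φ t ⬝ᵥ φ t) := by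
  set B := H + c • (1 : Matrix (Fin d) (Fin d) ℝ)
  set K := ∑ i, ∑ j, |(Aᵀ * B + B * A) i j| + ∑ i, ∑ j, |(Aᵀ + A) i j| + 1
  have hB := sum_sum_abs_nonneg (Aᵀ * B + B * A)
  have hA := sum_sum_abs_nonneg (Aᵀ + A)
  have hK : 0 < K := by linarith
  refine ⟨log (2 - c) / K, div_pos (log_pos (by linarith)) hK, fun φ hφ h0 t ht => ?_⟩
  have hquad : ∀ x, x ⬝ᵥ B *ᵥ x = x ⬝ᵥ H *ᵥ x + c * (x ⬝ᵥ x) := fun x => by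
    simp [B, add_mulVec, smul_mulVec]
  have hexp : exp (K * t) ≤ 2 - c := by
    calc exp (K * t) ≤ exp (log (2 - c)) := by
          gcongr
          exact (le_div_iff₀' hK).1 ht.2
      _ = 2 - c := exp_log (by linarith)
  have hgrowth := dotProduct_mulVec_self_le_of_linear hφ B (K := K)
    (by linarith) (by linarith) ht.1
  rw [hquad, hquad] at hgrowth
  linarith [mul_le_mul_of_nonneg_left hexp (dotProduct_self_nonneg (φ 0))]

/-- Let `A` be a real `d×d` matrix, `H` real symmetric `d×d`, and
`c ∈ (0,1)`. Then there is `η > 0`, depending only on `A`, `H`, `c`, such that every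
solution `φ` of `φ̇ = A φ` with `φ(0)ᵀ H φ(0) ≤ −‖φ(0)‖²` satisfies
`φ(t)ᵀ H φ(t) ≤ −c ‖φ(t)‖²` for all `t ∈ [0, η]` (Euclidean `‖x‖² = x ⬝ᵥ x`).
This lower-bounds the dwell time of the switching law, so it is well defined. -/
theorem stmt_8 (d : ℕ)
    (A H : Matrix (Fin d) (Fin d) ℝ) (hH : Hᵀ = H)
    (c : ℝ) (hc0 : 0 < c) (hc1 : c < 1) :
    ∃ η : ℝ, 0 < η ∧
      ∀ φ : ℝ → Fin d → ℝ,
        (∀ t : ℝ, HasDerivAt φ (A.mulVec (φ t)) t) →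
        φ 0 ⬝ᵥ H.mulVec (φ 0) ≤ -(φ 0 ⬝ᵥ φ 0) →
        ∀ t ∈ Set.Icc (0 : ℝ) η, φ t ⬝ᵥ H.mulVec (φ t) ≤ -c * (φ t ⬝ᵥ φ t) :=
  stmt_8_general d A H c hc1
end

section
/- Let n ≥ 2, let L be a real n×n matrix with L 1_n = 0_n, let Q be as in the context, and let a, b > 0. Let γ : ℝ → ℝ^n be twice differentiable, γ_d : ℝ → ℝ twice differentiable, and α : ℝ → ℝ^n. Define ξ_1(t) = Q γ(t), ξ_2(t) = γ̇(t) − γ̇_d(t) 1_n, and χ(t) = b ξ_1(t) + Q ξ_2(t). If γ̈(t) = −b ξ_2(t) − a L γ(t) − α(t) for all t, then χ̇(t) = −(a/b) L̄ χ(t) + (a/b) Q L ξ_2(t) − Q α(t) and ξ̇_2(t) = −(a/b) L Qᵀ χ(t) − (b I_n − (a/b) L) ξ_2(t) − α(t) − γ̈_d(t) 1_n, where L̄ = Q L Qᵀ. -/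
/-!
Since `L 1 = 0` and `Qᵀ Q = I - (1/n) 1 1ᵀ`, we have `L Qᵀ Q = L`,
hence `L Qᵀ χ = b L γ + L ξ₂`.
Differentiating `χ = b Q γ + Q ξ₂` and `ξ₂ = γ̇ - γ̇_d 1`, substituting the dynamics
for `γ̈` and using `Q 1 = 0` to drop the `γ̇_d` terms, both identities reduce to linear algebra.
-/

open Matrix

namespace Matrix

variable {R l m n : Type*} [CommRing R] [Fintype n]

theorem mulVec_const_eq_zero {M : Matrix m n R} (hM : M *ᵥ (fun _ => 1) = 0) (c : R) :
    M *ᵥ (fun _ => c) = 0 := by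
  have hc : (fun _ : n => c) = c • fun _ => 1 := by
    funext; simp
  rw [hc, mulVec_smul, hM, smul_zero]

theorem mul_transpose_mul_eq_self [Fintype m] [DecidableEq n] {L : Matrix l n R}
    {Q : Matrix m n R} {c : R} (hL : L *ᵥ (fun _ => 1) = 0)
    (hQ : Qᵀ * Q = 1 - c • of (fun _ _ => 1)) :
    L * Qᵀ * Q = L := by
  have hLJ : L * of (fun _ _ => (1 : R) : n → n → R) = 0 := by
    ext i j
    simpa [mul_apply, mulVec, dotProduct] using congrFun hL i
  rw [Matrix.mul_assoc, hQ, Matrix.mul_sub, Matrix.mul_one, Matrix.mul_smul, hLJ, smul_zero,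
    sub_zero]

end Matrix

theorem HasDerivAt.matrix_mulVec {𝕜 m n : Type*} [NontriviallyNormedField 𝕜] [CompleteSpace 𝕜]
    [Fintype m] [Fintype n] (A : Matrix m n 𝕜) {f : 𝕜 → n → 𝕜} {f' : n → 𝕜} {t : 𝕜}
    (hf : HasDerivAt f f' t) : HasDerivAt (fun s => A *ᵥ f s) (A *ᵥ f') t :=
  (LinearMap.toContinuousLinearMap (mulVecLin A)).hasFDerivAt.comp_hasDerivAt t hf

theorem stmt_9_general (n : ℕ)
    (L : Matrix (Fin n) (Fin n) ℝ)
    (hL : L.mulVec (fun _ => (1 : ℝ)) = 0)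
    (Q : Matrix (Fin (n - 1)) (Fin n) ℝ)
    (hQ1 : Q.mulVec (fun _ => (1 : ℝ)) = 0)
    (hQtQ : Qᵀ * Q = 1 - (n : ℝ)⁻¹ • Matrix.of (fun _ _ => (1 : ℝ)))
    (a b : ℝ) (hb : 0 < b)
    (γ dγ ddγ : ℝ → Fin n → ℝ) (dγd ddγd : ℝ → ℝ)
    (hγ : ∀ t, HasDerivAt γ (dγ t) t)
    (hdγ : ∀ t, HasDerivAt dγ (ddγ t) t)
    (hdγd : ∀ t, HasDerivAt dγd (ddγd t) t)
    (α : ℝ → Fin n → ℝ)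
    (ξ1 : ℝ → Fin (n - 1) → ℝ) (hξ1 : ∀ t, ξ1 t = Q.mulVec (γ t))
    (ξ2 : ℝ → Fin n → ℝ) (hξ2 : ∀ t, ξ2 t = dγ t - fun _ => dγd t)
    (χ : ℝ → Fin (n - 1) → ℝ) (hχ : ∀ t, χ t = b • ξ1 t + Q.mulVec (ξ2 t))
    (hdyn : ∀ t, ddγ t = -(b • ξ2 t) - a • L.mulVec (γ t) - α t) :
    ∀ t : ℝ,
      HasDerivAt χ
        (-((a / b) • (Q * L * Qᵀ).mulVec (χ t)) + (a / b) • (Q * L).mulVec (ξ2 t)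
          - Q.mulVec (α t)) t ∧
      HasDerivAt ξ2
        (-((a / b) • (L * Qᵀ).mulVec (χ t)) - (b • ξ2 t - (a / b) • L.mulVec (ξ2 t))
          - α t - fun _ => ddγd t) t := by
  intro t
  have hLQtχ : (L * Qᵀ) *ᵥ χ t = b • L *ᵥ γ t + L *ᵥ ξ2 t := by
    rw [hχ, hξ1, mulVec_add, mulVec_smul, mulVec_mulVec, mulVec_mulVec,
      mul_transpose_mul_eq_self hL hQtQ]
  have hdξ2 : HasDerivAt ξ2 (ddγ t - fun _ => ddγd t) t := by
    rw [funext hξ2]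
    exact (hdγ t).sub (hasDerivAt_pi.2 fun _ => hdγd t)
  have hdχ : HasDerivAt χ (b • Q *ᵥ dγ t + Q *ᵥ (ddγ t - fun _ => ddγd t)) t := by
    rw [show χ = fun s => b • Q *ᵥ γ s + Q *ᵥ ξ2 s from funext fun s => by rw [hχ, hξ1]]
    exact (((hγ t).matrix_mulVec Q).const_smul b).add (hdξ2.matrix_mulVec Q)
  have hab : a / b * b = a := div_mul_cancel₀ a hb.ne'
  have hdγ_eq : dγ t = ξ2 t + fun _ => dγd t := by
    rw [hξ2]; abel
  constructor
  · convert hdχ using 1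
    rw [Matrix.mul_assoc, ← mulVec_mulVec, hLQtχ, hdγ_eq, hdyn]
    simp only [mulVec_add, mulVec_sub, mulVec_smul, mulVec_neg, mulVec_mulVec, smul_add,
      smul_smul, hab, mulVec_const_eq_zero hQ1]
    module
  · convert hdξ2 using 1
    rw [hLQtχ, hdyn]
    simp only [smul_add, smul_smul, hab]
    module

/-- With `n ≥ 2`, `L 1ₙ = 0`, `Q` as in the context, gains `a, b > 0`,
`γ : ℝ → ℝⁿ` twice differentiable (derivative `dγ`, second derivative `ddγ`),
`γ_d : ℝ → ℝ` twice differentiable (derivatives `dγd`, `ddγd`), define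
`ξ₁ = Q γ`, `ξ₂ = γ̇ − γ̇_d 1ₙ`, `χ = b ξ₁ + Q ξ₂`. If
`γ̈ = −b ξ₂ − a L γ − α`, then
`χ̇ = −(a/b) L̄ χ + (a/b) Q L ξ₂ − Q α` and
`ξ̇₂ = −(a/b) L Qᵀ χ − (b I − (a/b) L) ξ₂ − α − γ̈_d 1ₙ`, with `L̄ = Q L Qᵀ`. -/
theorem stmt_9 (n : ℕ) (hn : 2 ≤ n)
    (L : Matrix (Fin n) (Fin n) ℝ)
    (hL : L.mulVec (fun _ => (1 : ℝ)) = 0)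
    (Q : Matrix (Fin (n - 1)) (Fin n) ℝ)
    (hQ1 : Q.mulVec (fun _ => (1 : ℝ)) = 0)
    (hQQt : Q * Qᵀ = 1)
    (hQtQ : Qᵀ * Q = 1 - (n : ℝ)⁻¹ • Matrix.of (fun _ _ => (1 : ℝ)))
    (a b : ℝ) (ha : 0 < a) (hb : 0 < b)
    (γ dγ ddγ : ℝ → Fin n → ℝ) (γd dγd ddγd : ℝ → ℝ)
    (hγ : ∀ t, HasDerivAt γ (dγ t) t)
    (hdγ : ∀ t, HasDerivAt dγ (ddγ t) t)
    (hγd : ∀ t, HasDerivAt γd (dγd t) t)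
    (hdγd : ∀ t, HasDerivAt dγd (ddγd t) t)
    (α : ℝ → Fin n → ℝ)
    (ξ1 : ℝ → Fin (n - 1) → ℝ) (hξ1 : ∀ t, ξ1 t = Q.mulVec (γ t))
    (ξ2 : ℝ → Fin n → ℝ) (hξ2 : ∀ t, ξ2 t = dγ t - fun _ => dγd t)
    (χ : ℝ → Fin (n - 1) → ℝ) (hχ : ∀ t, χ t = b • ξ1 t + Q.mulVec (ξ2 t))
    (hdyn : ∀ t, ddγ t = -(b • ξ2 t) - a • L.mulVec (γ t) - α t) :
    ∀ t : ℝ,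
      HasDerivAt χ
        (-((a / b) • (Q * L * Qᵀ).mulVec (χ t)) + (a / b) • (Q * L).mulVec (ξ2 t)
          - Q.mulVec (α t)) t ∧
      HasDerivAt ξ2
        (-((a / b) • (L * Qᵀ).mulVec (χ t)) - (b • ξ2 t - (a / b) • L.mulVec (ξ2 t))
          - α t - fun _ => ddγd t) t :=
  stmt_9_general n L hL Q hQ1 hQtQ a b hb γ dγ ddγ dγd ddγd hγ hdγ hdγd α ξ1 hξ1 ξ2 hξ2 χ hχ hdyn
end
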